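/- At every point a ∈ ℝ⁴ the four vectors V_x(a), V_y(a), V₂(a), V₃(a) form a basis of ℝ⁴. (In particular, the rank-2 distribution spanned by V_x and V_y together with its first and second order brackets spans the whole tangent space at every point, i.e. the model satisfies the Engel nondegeneracy condition.) -/
import Mathlib

/-- The model vector field `V_x = (1/2)∂/∂x + y ∂/∂u₁ + xy ∂/∂u₂` on `ℝ⁴`. -/
noncomputable def Vx : (Fin 4 → ℝ) → (Fin 4 → ℝ) := fun a => ![1 / 2, 0, a 1, a 0 * a 1]

/-- The model vector field `V_y = −(1/2)∂/∂y + x ∂/∂u₁ + ((3x²+y²)/2) ∂/∂u₂` on `ℝ⁴`. -/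
noncomputable def Vy : (Fin 4 → ℝ) → (Fin 4 → ℝ) :=
  fun a => ![0, -(1 / 2), a 0, (3 * (a 0) ^ 2 + (a 1) ^ 2) / 2]

/-- The model vector field `V₂ = ∂/∂u₁ + 2x ∂/∂u₂` on `ℝ⁴`. -/
noncomputable def V2 : (Fin 4 → ℝ) → (Fin 4 → ℝ) := fun a => ![0, 0, 1, 2 * a 0]

/-- The model vector field `V₃ = ∂/∂u₂` on `ℝ⁴`. -/
noncomputable def V3 : (Fin 4 → ℝ) → (Fin 4 → ℝ) := fun _ => ![0, 0, 0, 1]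

/-- At every point `a ∈ ℝ⁴` the vectors `V_x(a), V_y(a), V₂(a), V₃(a)` form a basis of `ℝ⁴`. -/
theorem stmt_10 :
    ∀ a : Fin 4 → ℝ,
      LinearIndependent ℝ ![Vx a, Vy a, V2 a, V3 a] ∧
      Submodule.span ℝ (Set.range ![Vx a, Vy a, V2 a, V3 a]) = ⊤ := by
  intro a
  have hdet : (Matrix.of ![Vx a, Vy a, V2 a, V3 a]).det = -(1 / 4) := by
    simp [Matrix.det_succ_row_zero, Fin.sum_univ_succ, Vx, Vy, V2, V3]
    ring
  have hli : LinearIndependent ℝ ![Vx a, Vy a, V2 a, V3 a] := by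
    have := Matrix.linearIndependent_rows_iff_isUnit
      (A := Matrix.of ![Vx a, Vy a, V2 a, V3 a]) (K := ℝ)
    rw [Matrix.isUnit_iff_isUnit_det, hdet] at this
    exact this.mpr (by norm_num)
  refine ⟨hli, hli.span_eq_top_of_card_eq_finrank ?_⟩
  simp
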